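/- Let H be a 2g-dimensional symplectic ℤ-module (g = p) with standard basis and ω_p = Σᵢaᵢ∧bᵢ the symplectic form. In Λ²(H ⊗ 𝔽_p), the reduction mod p of the vector v = ω_p − p·(a₁∧b₁) equals the class of ω_p, lies in ker(F) ∩ ker(Ĥ + p − 2) (the primitive part of weight), and pairs to zero mod p with every integral vector w in ker(F) ∩ ker(Ĥ + p − 2): ⟨v, w⟩ ∈ pℤ. -/
import Mathlib


open Finset

/-- A concrete model of the exterior algebra `Λ*H` of `H = ℤ^{2g}`:
functions on subsets of the index set, the subset `S` encoding the basis
monomial `e_S`. -/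
abbrev ExtZ (g : ℕ) := Finset (Fin (2 * g)) → ℤ

/-- The Koszul sign appearing when wedging the monomials `e_A` and `e_B`. -/
def esignZ {n : ℕ} (A B : Finset (Fin n)) : ℤ :=
  (-1 : ℤ) ^ (∑ a ∈ A, (B.filter (fun b => b < a)).card)

/-- The wedge product in the concrete model. -/
def wedgeZ {n : ℕ} (x y : Finset (Fin n) → ℤ) : Finset (Fin n) → ℤ :=
  fun S => ∑ A ∈ S.powerset, esignZ A (S \ A) * x A * y (S \ A)

/-- The basis monomial `e_S`. -/
def singleZ {n : ℕ} (S₀ : Finset (Fin n)) : Finset (Fin n) → ℤ :=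
  fun T => if T = S₀ then (1 : ℤ) else 0

/-- The inner product on `Λ*H` making the basis monomials orthonormal. -/
def innerZ {n : ℕ} (x y : Finset (Fin n) → ℤ) : ℤ :=
  ∑ S : Finset (Fin n), x S * y S

/-- The index of the basis vector `aᵢ`. -/
def aIdxZ {g : ℕ} (i : Fin g) : Fin (2 * g) := ⟨i.1, by have := i.2; omega⟩

/-- The index of the basis vector `bᵢ`. -/
def bIdxZ {g : ℕ} (i : Fin g) : Fin (2 * g) := ⟨g + i.1, by have := i.2; omega⟩

/-- The standard symplectic form `ω = Σᵢ aᵢ ∧ bᵢ`. -/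
def omegaZ (g : ℕ) : ExtZ g := ∑ i : Fin g, singleZ {aIdxZ i, bIdxZ i}

/-- The degree operator `Ĥ(α) = (deg α − g)·α`. -/
def HopZ (g : ℕ) (x : ExtZ g) : ExtZ g := fun S => ((S.card : ℤ) - g) * x S

-- lemmas
lemma aIdx_ne_bIdx {g : ℕ} (i j : Fin g) : aIdxZ i ≠ bIdxZ j := by
  simp only [aIdxZ, bIdxZ, ne_eq, Fin.mk.injEq]
  have := i.2; omega

lemma pair_card {g : ℕ} (i : Fin g) : ({aIdxZ i, bIdxZ i} : Finset (Fin (2*g))).card = 2 := by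
  rw [card_insert_of_notMem (by simp [aIdx_ne_bIdx]), card_singleton]

lemma pair_inj {g : ℕ} {i j : Fin g}
    (h : ({aIdxZ i, bIdxZ i} : Finset (Fin (2*g))) = {aIdxZ j, bIdxZ j}) : i = j := by
  have : aIdxZ i ∈ ({aIdxZ j, bIdxZ j} : Finset (Fin (2*g))) := by
    rw [← h]; simp
  simp only [mem_insert, mem_singleton] at this
  rcases this with h1 | h1
  · have : i.1 = j.1 := by simpa [aIdxZ, Fin.ext_iff] using h1
    exact Fin.ext this
  · exact absurd h1 (aIdx_ne_bIdx i j)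

lemma omegaZ_apply {g : ℕ} (S : Finset (Fin (2*g))) :
    omegaZ g S = ∑ i : Fin g, if S = {aIdxZ i, bIdxZ i} then 1 else 0 := by
  simp [omegaZ, singleZ]

lemma omegaZ_pair {g : ℕ} (i : Fin g) : omegaZ g {aIdxZ i, bIdxZ i} = 1 := by
  rw [omegaZ_apply, Finset.sum_eq_single i]
  · simp
  · intro j _ hj
    simp only [ite_eq_right_iff]
    intro h; exact absurd (pair_inj h).symm hj
  · simp

lemma omegaZ_ne_zero {g : ℕ} {S : Finset (Fin (2*g))} (h : omegaZ g S ≠ 0) :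
    ∃ i : Fin g, S = {aIdxZ i, bIdxZ i} := by
  rw [omegaZ_apply] at h
  obtain ⟨i, _, hi⟩ := Finset.exists_ne_zero_of_sum_ne_zero h
  refine ⟨i, ?_⟩
  by_contra hc; simp [hc] at hi

lemma inner_single {n : ℕ} (x : Finset (Fin n) → ℤ) (S : Finset (Fin n)) :
    innerZ x (singleZ S) = x S := by
  simp [innerZ, singleZ, mul_ite]

lemma innerZ_comm {n : ℕ} (x y : Finset (Fin n) → ℤ) : innerZ x y = innerZ y x := by
  simp [innerZ, mul_comm]

lemma innerZ_omega {g : ℕ} (x : Finset (Fin (2*g)) → ℤ) :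
    innerZ (omegaZ g) x = ∑ i : Fin g, x {aIdxZ i, bIdxZ i} := by
  simp only [innerZ, omegaZ_apply, Finset.sum_mul, ite_mul, one_mul, zero_mul]
  rw [Finset.sum_comm]
  refine Finset.sum_congr rfl fun i _ => ?_
  simp

lemma wedge_pair {g : ℕ} (S : Finset (Fin (2*g))) (i : Fin g) :
    wedgeZ (omegaZ g) (singleZ S) {aIdxZ i, bIdxZ i} = if S = ∅ then 1 else 0 := by
  rw [wedgeZ, Finset.sum_eq_single ({aIdxZ i, bIdxZ i} : Finset (Fin (2*g)))]
  · rw [sdiff_self]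
    simp only [esignZ, singleZ, omegaZ_pair]
    simp [eq_comm]
  · intro A hA hne
    by_cases hw : omegaZ g A = 0
    · simp [hw]
    · obtain ⟨j, rfl⟩ := omegaZ_ne_zero hw
      exfalso
      apply hne
      apply Finset.eq_of_subset_of_card_le (Finset.mem_powerset.mp hA)
      rw [pair_card, pair_card]
  · simp

lemma wedge_empty {g : ℕ} : wedgeZ (omegaZ g) (singleZ (∅ : Finset (Fin (2*g)))) = omegaZ g := by
  funext T
  rw [wedgeZ, Finset.sum_eq_single T]
  · simp [esignZ, singleZ]
  · intro A hA hne
    have : T \ A ≠ ∅ := by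
      rw [Finset.mem_powerset] at hA
      intro h
      have hc := Finset.card_sdiff_add_card_eq_card hA
      rw [h, Finset.card_empty] at hc
      exact hne (Finset.eq_of_subset_of_card_le hA (by omega))
    simp [singleZ, this]
  · simp

lemma single_inner {n : ℕ} (x : Finset (Fin n) → ℤ) (S : Finset (Fin n)) :
    innerZ (singleZ S) x = x S := by rw [innerZ_comm, inner_single]

lemma innerZ_sub_smul {n : ℕ} (x y z : Finset (Fin n) → ℤ) (c : ℤ) :
    innerZ (x - c • y) z = innerZ x z - c * innerZ y z := by
  simp [innerZ, sub_mul, Finset.mul_sum, Finset.sum_sub_distrib, mul_assoc]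


/-- With `g = p` an odd prime, let `v = ω_p − p·(a₁∧b₁)` in `Λ²H` and let
`F` be the adjoint of `E(α) = ω_p ∧ α`. Then `v ∈ ker F ∩ ker(Ĥ + p − 2)`;
`v` pairs into `pℤ` with every integral vector of `ker F ∩ ker(Ĥ + p − 2)`;
and the reduction of `v` mod `p` equals the class of `ω_p` in `Λ²(H ⊗ 𝔽_p)`,
which is nonzero. -/
theorem omega_null_vector_mod_p (p : ℕ) (hp : p.Prime) (hodd : Odd p)
    (F : ExtZ p → ExtZ p)
    (hadj : ∀ x y : ExtZ p, innerZ (F x) y = innerZ x (wedgeZ (omegaZ p) y)) :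
    F (omegaZ p - (p : ℤ) • singleZ {aIdxZ ⟨0, hp.pos⟩, bIdxZ ⟨0, hp.pos⟩}) = 0 ∧
    HopZ p (omegaZ p - (p : ℤ) • singleZ {aIdxZ ⟨0, hp.pos⟩, bIdxZ ⟨0, hp.pos⟩})
      + ((p : ℤ) - 2) • (omegaZ p - (p : ℤ) • singleZ {aIdxZ ⟨0, hp.pos⟩, bIdxZ ⟨0, hp.pos⟩}) = 0 ∧
    (∀ w : ExtZ p, F w = 0 → HopZ p w + ((p : ℤ) - 2) • w = 0 →
      (p : ℤ) ∣ innerZ (omegaZ p - (p : ℤ) • singleZ {aIdxZ ⟨0, hp.pos⟩, bIdxZ ⟨0, hp.pos⟩}) w) ∧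
    (∀ S, (((omegaZ p - (p : ℤ) • singleZ {aIdxZ ⟨0, hp.pos⟩, bIdxZ ⟨0, hp.pos⟩}) S : ZMod p)
      = ((omegaZ p) S : ZMod p))) ∧
    (∃ S, (((omegaZ p - (p : ℤ) • singleZ {aIdxZ ⟨0, hp.pos⟩, bIdxZ ⟨0, hp.pos⟩}) S : ZMod p) ≠ 0)) := by
  haveI : Fact p.Prime := ⟨hp⟩
  set i0 : Fin p := ⟨0, hp.pos⟩ with hi0
  set P0 : Finset (Fin (2 * p)) := {aIdxZ i0, bIdxZ i0} with hP0
  set v : ExtZ p := omegaZ p - (p : ℤ) • singleZ P0 with hv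
  have hvS : ∀ S, v S = omegaZ p S - p * (if S = P0 then 1 else 0) := by
    intro S; simp [hv, singleZ]
  have hvz : ∀ S : Finset (Fin (2 * p)), S.card ≠ 2 → v S = 0 := by
    intro S hS
    rw [hvS]
    have h1 : omegaZ p S = 0 := by
      by_contra h
      obtain ⟨i, rfl⟩ := omegaZ_ne_zero h
      exact hS (pair_card i)
    have h2 : S ≠ P0 := by
      intro h; rw [h] at hS; exact hS (pair_card i0)
    simp [h1, h2]
  have hpcast : ((p : ℤ) : ZMod p) = 0 := by
    push_cast; exact ZMod.natCast_self p
  refine ⟨?_, ?_, ?_, ?_, ?_⟩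
  · funext S
    have h := hadj v (singleZ S)
    rw [inner_single] at h
    rw [Pi.zero_apply, h, hv, innerZ_sub_smul, innerZ_omega, single_inner]
    rw [show wedgeZ (omegaZ p) (singleZ S) P0 = if S = ∅ then 1 else 0 from wedge_pair S i0]
    simp only [wedge_pair]
    simp only [Finset.sum_const, Finset.card_univ, Fintype.card_fin, nsmul_eq_mul]
    split_ifs <;> ring
  · funext S
    simp only [Pi.add_apply, Pi.smul_apply, smul_eq_mul, HopZ, Pi.zero_apply]
    have : ((S.card : ℤ) - p) * v S + ((p : ℤ) - 2) * v S = ((S.card : ℤ) - 2) * v S := by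
      ring
    rw [this]
    by_cases h2 : S.card = 2
    · rw [h2]; ring
    · rw [hvz S h2]; ring
  · intro w hF _
    have h0 : innerZ w (omegaZ p) = 0 := by
      rw [← wedge_empty, ← hadj, hF]
      simp [innerZ]
    rw [innerZ_sub_smul, innerZ_omega, single_inner]
    rw [innerZ_comm] at h0
    rw [innerZ_omega] at h0
    rw [h0]
    exact ⟨-(w P0), by ring⟩
  · intro S
    rw [hvS]
    push_cast
    rw [ZMod.natCast_self]
    ring
  · refine ⟨P0, ?_⟩
    rw [hvS]
    simp only [if_pos rfl, hP0, omegaZ_pair]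
    push_cast
    rw [ZMod.natCast_self]
    simp
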